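/- arXiv:1611.01192 — 2 statements merged into one kernel-verified Lean document; each statement's English description precedes it below -/
import Mathlib

section
/- Assume the abc conjecture. Then there are only finitely many natural numbers n such that 2^n + 1 is a powerful number. -/
/-- The radical of a natural number: the product of its distinct prime factors. -/
def rad (n : ℕ) : ℕ := ∏ p ∈ n.primeFactors, p

/-- A natural number is powerful if every prime dividing it does so at least to the square. -/
def Powerful (n : ℕ) : Prop := ∀ p : ℕ, p.Prime → p ∣ n → p ^ 2 ∣ n

/-- The abc conjecture: for every ε > 0, there are only finitely many triples (a,b,c) of
positive integers with gcd(a,b) = 1, a + b = c, and rad(abc)^(1+ε) < c. -/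
def ABCConjecture : Prop :=
  ∀ ε : ℝ, 0 < ε →
    {t : ℕ × ℕ × ℕ | 0 < t.1 ∧ 0 < t.2.1 ∧ 0 < t.2.2 ∧
      Nat.gcd t.1 t.2.1 = 1 ∧ t.1 + t.2.1 = t.2.2 ∧
      (rad (t.1 * t.2.1 * t.2.2) : ℝ) ^ (1 + ε) < (t.2.2 : ℝ)}.Finite

lemma rad_pos (n : ℕ) : 0 < rad n := by
  apply Finset.prod_pos
  intro p hp
  exact (Nat.prime_of_mem_primeFactors hp).pos

lemma rad_sq_dvd_of_powerful {n : ℕ} (hn : n ≠ 0) (h : Powerful n) : rad n ^ 2 ∣ n := by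
  have h1 : rad n ^ 2 = ∏ p ∈ n.primeFactors, p ^ 2 := by
    rw [rad, ← Finset.prod_pow]
  have h2 : (∏ p ∈ n.primeFactors, p ^ n.factorization p) = n := by
    rw [← Nat.support_factorization]
    exact Nat.factorization_prod_pow_eq_self hn
  rw [h1]
  nth_rewrite 2 [← h2]
  apply Finset.prod_dvd_prod_of_dvd
  intro p hp
  have hpp := Nat.prime_of_mem_primeFactors hp
  apply pow_dvd_pow
  rw [← Nat.Prime.pow_dvd_iff_le_factorization hpp hn]
  exact h p hpp (Nat.dvd_of_mem_primeFactors hp)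

lemma rad_key {n : ℕ} (hn : 1 ≤ n) :
    rad (1 * 2 ^ n * (2 ^ n + 1)) = 2 * rad (2 ^ n + 1) := by
  have h2 : (2 : ℕ) ^ n ≠ 0 := by positivity
  have h3 : (2 : ℕ) ^ n + 1 ≠ 0 := by positivity
  have hodd : ¬ (2 ∣ 2 ^ n + 1) := by
    intro h
    have : (2 : ℕ) ∣ 2 ^ n := dvd_pow_self 2 (by omega)
    omega
  rw [one_mul, rad, Nat.primeFactors_mul h2 h3,
    Nat.primeFactors_prime_pow (by omega) Nat.prime_two]
  rw [Finset.prod_union]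
  · rw [Finset.prod_singleton]; rfl
  · simp only [Finset.disjoint_singleton_left]
    intro hmem
    exact hodd (Nat.dvd_of_mem_primeFactors hmem)

theorem two_pow_add_one_powerful_finite (habc : ABCConjecture) :
    {n : ℕ | Powerful (2 ^ n + 1)}.Finite := by
  have hT := habc (1/2) (by norm_num)
  set T := {t : ℕ × ℕ × ℕ | 0 < t.1 ∧ 0 < t.2.1 ∧ 0 < t.2.2 ∧
      Nat.gcd t.1 t.2.1 = 1 ∧ t.1 + t.2.1 = t.2.2 ∧
      (rad (t.1 * t.2.1 * t.2.2) : ℝ) ^ (1 + 1/2 : ℝ) < (t.2.2 : ℝ)} with hTdef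
  set f : ℕ → ℕ × ℕ × ℕ := fun n => (1, 2 ^ n, 2 ^ n + 1) with hfdef
  have hfin : (f ⁻¹' T).Finite := by
    apply Set.Finite.preimage _ hT
    intro a _ b _ hab
    have : (2 : ℕ) ^ a = 2 ^ b := congrArg (fun t => t.2.1) hab
    exact Nat.pow_right_injective (le_refl 2) this
  apply Set.Finite.subset ((Set.finite_Iic 6).union hfin)
  intro n hn
  by_cases h6 : n ≤ 6
  · exact Or.inl h6
  right
  push_neg at h6
  have hn1 : 1 ≤ n := by omega
  -- c = 2^n + 1, c > 128
  set c : ℕ := 2 ^ n + 1 with hc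
  have hcbig : 128 < c := by
    have : 2 ^ 7 ≤ 2 ^ n := Nat.pow_le_pow_right (by norm_num) (by omega)
    omega
  have hcpos : 0 < c := by omega
  have hpow : Powerful c := hn
  have hdvd : rad c ^ 2 ∣ c := rad_sq_dvd_of_powerful (by omega) hpow
  have hr2 : rad c ^ 2 ≤ c := Nat.le_of_dvd hcpos hdvd
  have hrpos : 0 < rad c := rad_pos c
  -- key nat inequality : (2 * rad c)^3 < c^2
  have key : (2 * rad c) ^ 3 < c ^ 2 := by
    have h8r : 8 * rad c < c := by
      nlinarith [hr2, hcbig, hrpos]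
    calc (2 * rad c) ^ 3 = (8 * rad c) * (rad c ^ 2) := by ring
    _ < c * c := by
        apply Nat.mul_lt_mul_of_lt_of_le h8r hr2 hcpos
    _ = c ^ 2 := by ring
  simp only [hfdef, hTdef, Set.mem_preimage, Set.mem_setOf_eq]
  refine ⟨by norm_num, by positivity, by positivity, by simp, by omega, ?_⟩
  -- the real inequality
  have hradeq : rad (1 * 2 ^ n * (2 ^ n + 1)) = 2 * rad c := rad_key hn1
  show (rad (1 * 2 ^ n * (2 ^ n + 1)) : ℝ) ^ (1 + 1/2 : ℝ) < ((2 ^ n + 1 : ℕ) : ℝ)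
  rw [hradeq]
  have hR : ((2 * rad c : ℕ) : ℝ) ≥ 0 := by positivity
  have hkeyR : ((2 * rad c : ℕ) : ℝ) ^ (3 : ℕ) < (c : ℝ) ^ (2 : ℕ) := by
    exact_mod_cast key
  have e1 : ((2 * rad c : ℕ) : ℝ) ^ (1 + 1/2 : ℝ) =
      (((2 * rad c : ℕ) : ℝ) ^ (3 : ℕ)) ^ ((1 : ℝ)/2) := by
    rw [← Real.rpow_natCast _ 3, ← Real.rpow_mul hR]
    norm_num
  have e2 : ((c : ℝ) ^ (2 : ℕ)) ^ ((1 : ℝ)/2) = (c : ℝ) := by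
    rw [← Real.rpow_natCast (c : ℝ) 2, ← Real.rpow_mul (by positivity)]
    norm_num
  rw [e1]
  calc (((2 * rad c : ℕ) : ℝ) ^ (3 : ℕ)) ^ ((1 : ℝ)/2)
      < ((c : ℝ) ^ (2 : ℕ)) ^ ((1 : ℝ)/2) :=
        Real.rpow_lt_rpow (by positivity) hkeyR (by norm_num)
    _ = (c : ℝ) := e2
    _ = ((2 ^ n + 1 : ℕ) : ℝ) := by rw [hc]
end

section
/- Assume the abc conjecture. Then for every fixed positive integers r and k, there are only finitely many natural numbers n such that (n!)^r + k is a powerful number. -/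
lemma rad_dvd_rad {a b : ℕ} (h : a ∣ b) (hb : b ≠ 0) : rad a ∣ rad b :=
  Finset.prod_dvd_prod_of_subset _ _ _ (Nat.primeFactors_mono h hb)

lemma rad_mul_dvd (a b : ℕ) : rad (a * b) ∣ rad a * rad b := by
  rcases eq_or_ne a 0 with rfl | ha
  · simp [rad]
  rcases eq_or_ne b 0 with rfl | hb
  · simp [rad]
  unfold rad
  rw [Nat.primeFactors_mul ha hb, ← Finset.union_sdiff_self_eq_union,
    Finset.prod_union Finset.disjoint_sdiff]
  exact mul_dvd_mul dvd_rfl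
    (Finset.prod_dvd_prod_of_subset _ _ _ Finset.sdiff_subset)

lemma rad_factorial_le (n : ℕ) : rad (n.factorial) ≤ 4 ^ n := by
  have : rad (n.factorial) = primorial n := by
    unfold rad primorial
    congr 1
    ext p
    simp only [Nat.mem_primeFactors, Finset.mem_filter, Finset.mem_range, Nat.lt_succ_iff]
    constructor
    · rintro ⟨hp, hd, -⟩
      exact ⟨(Nat.Prime.dvd_factorial hp).mp hd, hp⟩
    · rintro ⟨hle, hp⟩
      exact ⟨hp, (Nat.Prime.dvd_factorial hp).mpr hle, n.factorial_ne_zero⟩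
  rw [this]
  exact primorial_le_4_pow n

lemma rad_le_self {n : ℕ} (hn : 0 < n) : rad n ≤ n :=
  Nat.le_of_dvd hn (Nat.prod_primeFactors_dvd n)

lemma Powerful.rad_sq_dvd {m : ℕ} (hm : Powerful m) : rad m ^ 2 ∣ m := by
  unfold rad
  rw [← Finset.prod_pow]
  refine Finset.prod_dvd_of_isRelPrime ?_ ?_
  · intro p hp q hq hpq
    have hp' := Nat.prime_of_mem_primeFactors hp
    have hq' := Nat.prime_of_mem_primeFactors hq
    intro c hcp hcq
    have hco : Nat.Coprime (p ^ 2) (q ^ 2) :=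
      ((Nat.coprime_primes hp' hq').mpr hpq).pow 2 2
    have : c ∣ 1 := hco ▸ Nat.dvd_gcd hcp hcq
    exact isUnit_of_dvd_one this
  · intro p hp
    exact hm p (Nat.prime_of_mem_primeFactors hp) (Nat.dvd_of_mem_primeFactors hp)

theorem factorial_pow_add_powerful_finite (habc : ABCConjecture) (r k : ℕ)
    (hr : 0 < r) (hk : 0 < k) :
    {n : ℕ | Powerful ((n.factorial) ^ r + k)}.Finite := by
  obtain ⟨N0, hN0⟩ :=
    (Nat.eventually_mul_pow_lt_factorial_sub (k ^ 10) 4096 0).exists_forall_of_atTop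
  set M := max N0 2 with hM
  set T := {t : ℕ × ℕ × ℕ | 0 < t.1 ∧ 0 < t.2.1 ∧ 0 < t.2.2 ∧
      Nat.gcd t.1 t.2.1 = 1 ∧ t.1 + t.2.1 = t.2.2 ∧
      (rad (t.1 * t.2.1 * t.2.2) : ℝ) ^ (1 + (1/2 : ℝ)) < (t.2.2 : ℝ)} with hT
  have hTfin : T.Finite := habc (1/2) (by norm_num)
  set f : ℕ → ℕ × ℕ × ℕ := fun n =>
    ((n.factorial ^ r) / Nat.gcd (n.factorial ^ r) k,
     k / Nat.gcd (n.factorial ^ r) k,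
     (n.factorial ^ r + k) / Nat.gcd (n.factorial ^ r) k) with hf
  have key : ∀ n : ℕ, M ≤ n → Powerful (n.factorial ^ r + k) → f n ∈ T := by
    intro n hn hpow
    set x := n.factorial ^ r with hx
    set m := x + k with hmdef
    set d := Nat.gcd x k with hd
    have hxpos : 0 < x := pow_pos n.factorial_pos r
    have hmpos : 0 < m := Nat.add_pos_left hxpos k
    have hdpos : 0 < d := Nat.gcd_pos_of_pos_right x hk
    have hdx : d ∣ x := Nat.gcd_dvd_left x k
    have hdk : d ∣ k := Nat.gcd_dvd_right x k
    have hdm : d ∣ m := dvd_add hdx hdk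
    have hapos : 0 < x / d := Nat.div_pos (Nat.le_of_dvd hxpos hdx) hdpos
    have hbpos : 0 < k / d := Nat.div_pos (Nat.le_of_dvd hk hdk) hdpos
    have hcpos : 0 < m / d := Nat.div_pos (Nat.le_of_dvd hmpos hdm) hdpos
    have hsum : x / d + k / d = m / d := (Nat.add_div_of_dvd_right hdx).symm
    have hco : Nat.gcd (x / d) (k / d) = 1 := Nat.coprime_div_gcd_div_gcd hdpos
    set R := rad ((x / d) * (k / d) * (m / d)) with hR
    have hRdvd : R ∣ rad x * rad k * rad m := by
      have h1 : (x / d) * (k / d) * (m / d) ∣ x * k * m :=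
        mul_dvd_mul (mul_dvd_mul (Nat.div_dvd_of_dvd hdx) (Nat.div_dvd_of_dvd hdk))
          (Nat.div_dvd_of_dvd hdm)
      have h2 : R ∣ rad (x * k * m) := rad_dvd_rad h1 (Nat.mul_pos (Nat.mul_pos hxpos hk) hmpos).ne'
      have h3 : rad (x * k * m) ∣ rad (x * k) * rad m := rad_mul_dvd _ _
      have h4 : rad (x * k) * rad m ∣ (rad x * rad k) * rad m :=
        mul_dvd_mul (rad_mul_dvd x k) dvd_rfl
      exact h2.trans (h3.trans h4)
    have hradx : rad x = rad n.factorial := by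
      unfold rad
      rw [hx, Nat.primeFactors_pow _ hr.ne']
    have hRle : R ≤ 4 ^ n * k * rad m := by
      refine (Nat.le_of_dvd (Nat.mul_pos (Nat.mul_pos (rad_pos x) (rad_pos k)) (rad_pos m)) hRdvd).trans ?_
      exact Nat.mul_le_mul
        (Nat.mul_le_mul (hradx ▸ rad_factorial_le n) (rad_le_self hk)) le_rfl
    have hsq : rad m ^ 2 ≤ m := Nat.le_of_dvd hmpos hpow.rad_sq_dvd
    have hmlek : m ≤ (m / d) * k := by
      calc m = (m / d) * d := (Nat.div_mul_cancel hdm).symm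
        _ ≤ (m / d) * k := Nat.mul_le_mul_left _ (Nat.le_of_dvd hk hdk)
    have hbig : 4096 ^ n * k ^ 10 < m := by
      have h1 := hN0 n (le_trans (le_max_left _ _) hn)
      simp only [Nat.sub_zero] at h1
      have h2 : n.factorial ≤ x := Nat.le_self_pow hr.ne' _
      calc 4096 ^ n * k ^ 10 = k ^ 10 * 4096 ^ n := by ring
        _ < n.factorial := h1
        _ ≤ x := h2
        _ < m := by
            rw [hmdef]
            exact Nat.lt_add_of_pos_right hk
    have h4096 : (4096 : ℕ) ^ n = (4 ^ n) ^ 6 := by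
      rw [show (4096 : ℕ) = 4 ^ 6 by norm_num, ← pow_mul, ← pow_mul, mul_comm]
    rw [h4096] at hbig
    have h6 : R ^ 6 * k ^ 4 < (m / d) ^ 4 * k ^ 4 := by
      calc R ^ 6 * k ^ 4 ≤ (4 ^ n * k * rad m) ^ 6 * k ^ 4 := by gcongr
        _ = (4 ^ n) ^ 6 * k ^ 10 * (rad m ^ 2) ^ 3 := by ring
        _ ≤ (4 ^ n) ^ 6 * k ^ 10 * m ^ 3 := by gcongr
        _ < m * m ^ 3 := mul_lt_mul_of_pos_right hbig (by positivity)
        _ = m ^ 4 := by ring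
        _ ≤ ((m / d) * k) ^ 4 := Nat.pow_le_pow_left hmlek 4
        _ = (m / d) ^ 4 * k ^ 4 := by ring
    have h6' : R ^ 6 < (m / d) ^ 4 := Nat.lt_of_mul_lt_mul_right h6
    have hkey : R ^ 3 < (m / d) ^ 2 := by
      have hsqlt : (R ^ 3) ^ 2 < ((m / d) ^ 2) ^ 2 := by
        calc (R ^ 3) ^ 2 = R ^ 6 := by ring
          _ < (m / d) ^ 4 := h6'
          _ = ((m / d) ^ 2) ^ 2 := by ring
      exact lt_of_pow_lt_pow_left₀ 2 (Nat.zero_le _) hsqlt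
    refine ⟨hapos, hbpos, hcpos, hco, hsum, ?_⟩
    have hRnn : (0:ℝ) ≤ (R:ℝ) := Nat.cast_nonneg R
    have hcast : ((R:ℝ) ^ (1 + (1/2:ℝ))) ^ 2 < (((m / d : ℕ)):ℝ) ^ 2 := by
      have heq : ((R:ℝ) ^ (1 + (1/2:ℝ))) ^ 2 = (R:ℝ) ^ (3:ℕ) := by
        rw [← Real.rpow_natCast ((R:ℝ) ^ (1 + (1/2:ℝ))) 2, ← Real.rpow_mul hRnn,
          show (1 + (1/2:ℝ)) * ((2:ℕ):ℝ) = ((3:ℕ):ℝ) by push_cast; norm_num,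
          Real.rpow_natCast]
      rw [heq]
      exact_mod_cast hkey
    exact lt_of_pow_lt_pow_left₀ 2 (Nat.cast_nonneg _) hcast
  have hsub : {n : ℕ | Powerful (n.factorial ^ r + k)} ⊆
      Set.Iio M ∪ {n : ℕ | M ≤ n ∧ Powerful (n.factorial ^ r + k)} := by
    intro n hn
    rcases lt_or_ge n M with h | h
    · exact Or.inl h
    · exact Or.inr ⟨h, hn⟩
  refine Set.Finite.subset (Set.Finite.union (Set.finite_Iio M) ?_) hsub
  refine Set.Finite.of_finite_image (f := f) (hTfin.subset ?_) ?_
  · rintro t ⟨n, ⟨hn, hpow⟩, rfl⟩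
    exact key n hn hpow
  · rintro n₁ ⟨hn₁, -⟩ n₂ ⟨hn₂, -⟩ heq
    have recover : ∀ n : ℕ, (n.factorial ^ r + k) = (f n).2.2 * (k / (f n).2.1) := by
      intro n
      have hdk : Nat.gcd (n.factorial ^ r) k ∣ k := Nat.gcd_dvd_right _ k
      have hdm : Nat.gcd (n.factorial ^ r) k ∣ (n.factorial ^ r + k) :=
        dvd_add (Nat.gcd_dvd_left _ k) hdk
      have hb : k / (k / Nat.gcd (n.factorial ^ r) k) = Nat.gcd (n.factorial ^ r) k :=
        Nat.div_div_self hdk hk.ne'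
      show (n.factorial ^ r + k) =
        (n.factorial ^ r + k) / Nat.gcd (n.factorial ^ r) k *
          (k / (k / Nat.gcd (n.factorial ^ r) k))
      rw [hb, Nat.div_mul_cancel hdm]
    have hm12 : n₁.factorial ^ r + k = n₂.factorial ^ r + k := by
      rw [recover n₁, recover n₂, heq]
    have hx12 : n₁.factorial ^ r = n₂.factorial ^ r := Nat.add_right_cancel hm12
    have hfact : n₁.factorial = n₂.factorial := Nat.pow_left_injective hr.ne' hx12
    have h1 : 1 < n₁ := lt_of_lt_of_le (by norm_num) (le_trans (le_max_right N0 2) hn₁)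
    exact (Nat.factorial_inj h1).mp hfact
end
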